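/- arXiv:0707.1458 — 5 statements merged into one kernel-verified Lean document; each statement's English description precedes it below -/
import Mathlib

section
/- If the action of a group Γ on a set I satisfies the minimal condition on stabilizers, and the action of a group Λ on a set J satisfies the minimal condition on stabilizers, then the product action of Γ × Λ on I × J satisfies the minimal condition on stabilizers. -/
/-- The action of `G` on `S` satisfies the minimal condition on stabilizers:
there is no infinite sequence `(s n)` in `S` such that the pointwise stabilizers
of `{s 0, …, s n}` form a strictly decreasing sequence of subgroups of `G`. -/
def MinCondStabilizers (G S : Type*) [Group G] [MulAction G S] : Prop :=
  ¬ ∃ s : ℕ → S,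
      StrictAnti (fun n : ℕ => ⨅ k ∈ Finset.range (n + 1), MulAction.stabilizer G (s k))

/-- The product action of `Γ × Λ` on `I × J`. -/
instance prodGroupProdAction (Γ Λ I J : Type*) [Group Γ] [Group Λ]
    [MulAction Γ I] [MulAction Λ J] : MulAction (Γ × Λ) (I × J) where
  smul := fun p x => (p.1 • x.1, p.2 • x.2)
  one_smul := fun x => by
    show ((1 : Γ) • x.1, (1 : Λ) • x.2) = x
    simp
  mul_smul := fun p q x => by
    show ((p.1 * q.1) • x.1, (p.2 * q.2) • x.2)
        = (p.1 • q.1 • x.1, p.2 • q.2 • x.2)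
    simp [mul_smul]

private lemma mcs_mem {G S : Type*} [Group G] [MulAction G S] (s : ℕ → S) (g : G) (n : ℕ) :
    g ∈ ⨅ k ∈ Finset.range (n+1), MulAction.stabilizer G (s k) ↔
      ∀ k ≤ n, g ∈ MulAction.stabilizer G (s k) := by
  simp [Subgroup.mem_iInf, Nat.lt_succ_iff]

private lemma mcs_finite {G S : Type*} [Group G] [MulAction G S]
    (h : MinCondStabilizers G S) (s : ℕ → S) :
    {n : ℕ | (⨅ k ∈ Finset.range (n+1+1), MulAction.stabilizer G (s k)) <
        ⨅ k ∈ Finset.range (n+1), MulAction.stabilizer G (s k)}.Finite := by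
  by_contra hfin
  set p : ℕ → Prop := fun n => (⨅ k ∈ Finset.range (n+1+1), MulAction.stabilizer G (s k)) <
        ⨅ k ∈ Finset.range (n+1), MulAction.stabilizer G (s k) with hp
  have hmono : StrictMono (Nat.nth p) := Nat.nth_strictMono hfin
  apply h
  refine ⟨fun k => s (Nat.nth p k + 1), ?_⟩
  apply strictAnti_nat_of_succ_lt
  intro n
  have hpn : p (Nat.nth p (n+1)) := Nat.nth_mem_of_infinite hfin (n+1)
  rw [hp] at hpn
  obtain ⟨hle, g, hg1, hg2⟩ := SetLike.lt_iff_le_and_exists.mp hpn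
  rw [mcs_mem] at hg1
  -- g ∉ stabilizer of s (nth p (n+1) + 1)
  have hg3 : g ∉ MulAction.stabilizer G (s (Nat.nth p (n+1) + 1)) := by
    intro hc
    apply hg2
    rw [mcs_mem]
    intro k hk
    rcases Nat.lt_succ_iff_lt_or_eq.mp (Nat.lt_succ_of_le hk) with h' | h'
    · exact hg1 k (Nat.lt_succ_iff.mp h')
    · rwa [h']
  rw [SetLike.lt_iff_le_and_exists]
  constructor
  · intro x hx
    rw [mcs_mem] at hx ⊢
    exact fun k hk => hx k (le_trans hk (Nat.le_succ n))
  · refine ⟨g, ?_, ?_⟩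
    · rw [mcs_mem]
      intro k hk
      exact hg1 _ (Nat.succ_le_of_lt (hmono (Nat.lt_succ_of_le hk)))
    · rw [mcs_mem]
      intro hc
      exact hg3 (hc (n+1) le_rfl)

private lemma mcs_stab_prod {Γ Λ I J : Type*} [Group Γ] [Group Λ]
    [MulAction Γ I] [MulAction Λ J] (g : Γ × Λ) (x : I × J) :
    g ∈ MulAction.stabilizer (Γ × Λ) x ↔
      g.1 ∈ MulAction.stabilizer Γ x.1 ∧ g.2 ∈ MulAction.stabilizer Λ x.2 := by
  simp only [MulAction.mem_stabilizer_iff]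
  show (g.1 • x.1, g.2 • x.2) = x ↔ _
  rw [Prod.ext_iff]

/-- If `Γ ↷ I` and `Λ ↷ J` both satisfy the minimal condition on stabilizers, then so
does the product action of `Γ × Λ` on `I × J`. -/
theorem minCondStabilizers_prod (Γ Λ I J : Type*) [Group Γ] [Group Λ]
    [MulAction Γ I] [MulAction Λ J]
    (hΓ : MinCondStabilizers Γ I) (hΛ : MinCondStabilizers Λ J) :
    MinCondStabilizers (Γ × Λ) (I × J) := by
  rintro ⟨s, hs⟩
  have hA := mcs_finite hΓ (fun n => (s n).1)
  have hB := mcs_finite hΛ (fun n => (s n).2)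
  have key : ∀ n : ℕ,
      ((⨅ k ∈ Finset.range (n+1+1), MulAction.stabilizer Γ (s k).1) <
        ⨅ k ∈ Finset.range (n+1), MulAction.stabilizer Γ (s k).1) ∨
      ((⨅ k ∈ Finset.range (n+1+1), MulAction.stabilizer Λ (s k).2) <
        ⨅ k ∈ Finset.range (n+1), MulAction.stabilizer Λ (s k).2) := by
    intro n
    have hlt := hs (Nat.lt_succ_self n)
    obtain ⟨hle, g, hg1, hg2⟩ := SetLike.lt_iff_le_and_exists.mp hlt
    rw [mcs_mem] at hg1 hg2
    simp only [mcs_stab_prod] at hg1 hg2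
    push_neg at hg2
    obtain ⟨k, hk, hk2⟩ := hg2
    have hkeq : k = n + 1 := by
      rcases Nat.lt_succ_iff_lt_or_eq.mp (Nat.lt_succ_of_le hk) with h' | h'
      · exact absurd ((hg1 k (Nat.lt_succ_iff.mp h')).2) (hk2 (hg1 k (Nat.lt_succ_iff.mp h')).1)
      · exact h'
    subst hkeq
    rcases Classical.em (g.1 ∈ MulAction.stabilizer Γ (s (n+1)).1) with hmem | h'
    case inr =>
      left
      rw [SetLike.lt_iff_le_and_exists]
      refine ⟨?_, g.1, ?_, ?_⟩
      · intro x hx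
        rw [mcs_mem] at hx ⊢
        exact fun k hk => hx k (le_trans hk (Nat.le_succ n))
      · rw [mcs_mem]; exact fun k hk => (hg1 k hk).1
      · rw [mcs_mem]
        intro hc
        exact h' (hc (n+1) le_rfl)
    have h' := hk2 hmem
    right
    rw [SetLike.lt_iff_le_and_exists]
    refine ⟨?_, g.2, ?_, ?_⟩
    · intro x hx
      rw [mcs_mem] at hx ⊢
      exact fun k hk => hx k (le_trans hk (Nat.le_succ n))
    · rw [mcs_mem]; exact fun k hk => (hg1 k hk).2
    · rw [mcs_mem]
      intro hc
      exact h' (hc (n+1) le_rfl)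
  have : (Set.univ : Set ℕ).Finite := by
    have : (Set.univ : Set ℕ) ⊆ _ ∪ _ := fun n _ => (key n).imp id id
    exact Set.Finite.subset (hA.union hB) this
  exact Set.infinite_univ this
end

section
/- For a group Γ, the left-right action of Γ × Γ on Γ (given by (g,h)·x = g x h⁻¹) satisfies the minimal condition on stabilizers if and only if Γ satisfies the minimal condition on centralizers, i.e., there is no infinite sequence (g_n) in Γ such that the centralizers C_Γ(g_1, …, g_n) form a strictly decreasing sequence of subgroups. -/
/-- The left-right action of `Γ × Γ` on `Γ`: `(g, h) • x = g * x * h⁻¹`. -/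
instance leftRightAction (Γ : Type*) [Group Γ] : MulAction (Γ × Γ) Γ where
  smul := fun p x => p.1 * x * p.2⁻¹
  one_smul := fun x => by
    show (1 : Γ) * x * (1 : Γ)⁻¹ = x
    simp
  mul_smul := fun p q x => by
    show (p.1 * q.1) * x * (p.2 * q.2)⁻¹ = p.1 * (q.1 * x * q.2⁻¹) * p.2⁻¹
    group

/-- The group `Γ` satisfies the minimal condition on centralizers: there is no infinite
sequence `(g n)` in `Γ` whose centralizers `C_Γ(g 0, …, g n)` are strictly decreasing. -/
def MinCondCentralizers (Γ : Type*) [Group Γ] : Prop :=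
  ¬ ∃ g : ℕ → Γ,
      StrictAnti (fun n : ℕ => Subgroup.centralizer {x : Γ | ∃ k ≤ n, x = g k})

/-!
The stabilizer of `x` under the left-right action is `{(g, x⁻¹ g x)}`, and stabilizers along an
orbit are conjugate. Translating the points by `(s 0)⁻¹` on the right therefore moves `s 0`
to `1` without changing the shape of the chain of stabilizers, and once `s 0 = 1` the stabilizer of
`s 0, …, s n` is the diagonal copy of the centralizer of `s 0, …, s n`. Conversely, a strictly
decreasing chain of centralizers can be made to start with `1` by prepending `1`, after discarding
its first element if that one is central.
-/

open MulAction Subgroup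

lemma strictAnti_map_iff_of_injective {G N ι : Type*} [Group G] [Group N] [Preorder ι]
    {f : G →* N} (hf : Function.Injective f) {H : ι → Subgroup G} :
    StrictAnti (fun i => (H i).map f) ↔ StrictAnti H := by
  simp only [StrictAnti, map_lt_map_iff_of_injective hf]

section StabilizerPrefix

variable (G : Type*) {S : Type*} [Group G] [MulAction G S]

def stabilizerPrefix (s : ℕ → S) (n : ℕ) : Subgroup G :=
  ⨅ k ∈ Finset.range (n + 1), stabilizer G (s k)

variable {G}

lemma stabilizerPrefix_smul (a : G) (s : ℕ → S) (n : ℕ) :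
    stabilizerPrefix G (fun k => a • s k) n =
      (stabilizerPrefix G s n).map (MulAut.conj a).toMonoidHom := by
  show _ = (MulAut.conj a).mapSubgroup _
  simp only [stabilizerPrefix, OrderIso.map_iInf, stabilizer_smul_eq_stabilizer_map_conj]
  rfl

lemma strictAnti_stabilizerPrefix_smul_iff (a : G) (s : ℕ → S) :
    StrictAnti (stabilizerPrefix G fun k => a • s k) ↔ StrictAnti (stabilizerPrefix G s) := by
  simp only [funext (stabilizerPrefix_smul a s)]
  exact strictAnti_map_iff_of_injective (MulAut.conj a).injective

end StabilizerPrefix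

section CentralizerPrefix

variable {Γ : Type*} [Group Γ]

def centralizerPrefix (g : ℕ → Γ) (n : ℕ) : Subgroup Γ :=
  centralizer {x : Γ | ∃ k ≤ n, x = g k}

lemma mem_centralizerPrefix {g : ℕ → Γ} {n : ℕ} {z : Γ} :
    z ∈ centralizerPrefix g n ↔ ∀ k ≤ n, Commute (g k) z := by
  simp only [centralizerPrefix, mem_centralizer_iff, Set.mem_ofPred_eq, forall_exists_index,
    and_imp]
  exact ⟨fun h k hk => h _ k hk rfl, fun h _ k hk hx => hx ▸ h k hk⟩

lemma centralizerPrefix_succ_of_zero_eq_top {g : ℕ → Γ} (h : centralizerPrefix g 0 = ⊤)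
    (n : ℕ) :
    centralizerPrefix g (n + 1) = centralizerPrefix (fun k => g (k + 1)) n := by
  ext z
  have hz : Commute (g 0) z := mem_centralizerPrefix.1 (h ▸ mem_top z) 0 le_rfl
  simp only [mem_centralizerPrefix, ← Nat.lt_succ_iff, Nat.forall_lt_succ_left, hz, true_and]

def prependOne (g : ℕ → Γ) : ℕ → Γ
  | 0 => 1
  | k + 1 => g k

lemma centralizerPrefix_prependOne_zero (g : ℕ → Γ) :
    centralizerPrefix (prependOne g) 0 = ⊤ :=
  eq_top_iff.2 fun z _ => mem_centralizerPrefix.2 fun k hk => by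
    obtain rfl := Nat.le_zero.1 hk
    exact Commute.one_left z

lemma centralizerPrefix_prependOne_succ (g : ℕ → Γ) (n : ℕ) :
    centralizerPrefix (prependOne g) (n + 1) = centralizerPrefix g n :=
  centralizerPrefix_succ_of_zero_eq_top (centralizerPrefix_prependOne_zero g) n

lemma exists_eq_one_strictAnti_centralizerPrefix {g : ℕ → Γ}
    (hg : StrictAnti (centralizerPrefix g)) :
    ∃ t : ℕ → Γ, t 0 = 1 ∧ StrictAnti (centralizerPrefix t) := by
  by_cases h0 : centralizerPrefix g 0 = ⊤
  · refine ⟨prependOne fun k => g (k + 1), rfl, ?_⟩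
    convert hg using 1
    funext n
    cases n with
    | zero => rw [h0, centralizerPrefix_prependOne_zero]
    | succ n => rw [centralizerPrefix_prependOne_succ, centralizerPrefix_succ_of_zero_eq_top h0]
  · refine ⟨prependOne g, rfl, strictAnti_nat_of_succ_lt fun n => ?_⟩
    cases n with
    | zero =>
      rw [centralizerPrefix_prependOne_succ, centralizerPrefix_prependOne_zero]
      exact lt_top_iff_ne_top.2 h0
    | succ n =>
      rw [centralizerPrefix_prependOne_succ, centralizerPrefix_prependOne_succ]
      exact hg n.lt_succ_self

end CentralizerPrefix

section LeftRight

variable {Γ : Type*} [Group Γ]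

lemma leftRight_smul_def (p : Γ × Γ) (x : Γ) : p • x = p.1 * x * p.2⁻¹ := rfl

lemma stabilizerPrefix_eq_map_centralizerPrefix {t : ℕ → Γ} (ht : t 0 = 1) (n : ℕ) :
    stabilizerPrefix (Γ × Γ) t n =
      (centralizerPrefix t n).map ((MonoidHom.id Γ).prod (MonoidHom.id Γ)) := by
  ext ⟨a, b⟩
  simp only [stabilizerPrefix, mem_iInf, Finset.mem_range, Nat.lt_succ_iff, mem_stabilizer_iff,
    leftRight_smul_def, mem_map, mem_centralizerPrefix, MonoidHom.prod_apply, MonoidHom.id_apply,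
    Prod.mk.injEq]
  constructor
  · intro h
    obtain rfl : a = b := by simpa [ht, mul_inv_eq_one] using h 0 n.zero_le
    exact ⟨a, fun k hk => (mul_inv_eq_iff_eq_mul.1 (h k hk)).symm, rfl, rfl⟩
  · rintro ⟨c, hc, rfl, rfl⟩ k hk
    rw [mul_inv_eq_iff_eq_mul, (hc k hk).eq]

lemma strictAnti_stabilizerPrefix_iff_of_eq_one {t : ℕ → Γ} (ht : t 0 = 1) :
    StrictAnti (stabilizerPrefix (Γ × Γ) t) ↔ StrictAnti (centralizerPrefix t) := by
  simp only [funext (stabilizerPrefix_eq_map_centralizerPrefix ht)]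
  exact strictAnti_map_iff_of_injective fun a b h => congrArg Prod.fst h

end LeftRight

/-- The left-right action of `Γ × Γ` on `Γ` satisfies the minimal condition on stabilizers
if and only if `Γ` satisfies the minimal condition on centralizers. -/
theorem minCondStabilizers_leftRight_iff_minCondCentralizers (Γ : Type*) [Group Γ] :
    MinCondStabilizers (Γ × Γ) Γ ↔ MinCondCentralizers Γ := by
  refine not_congr ⟨fun ⟨s, hs⟩ => ?_, fun ⟨g, hg⟩ => ?_⟩
  · have hs' := (strictAnti_stabilizerPrefix_smul_iff ((1 : Γ), s 0) s).2 hs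
    exact ⟨_, (strictAnti_stabilizerPrefix_iff_of_eq_one (by simp [leftRight_smul_def])).1 hs'⟩
  · obtain ⟨t, ht0, ht⟩ := exists_eq_one_strictAnti_centralizerPrefix hg
    exact ⟨t, (strictAnti_stabilizerPrefix_iff_of_eq_one ht0).2 ht⟩
end

section
/- Let V be a finite-dimensional vector space over a field k and let the affine group GL(V) ⋉ V act on V by (g,v)·w = g w + v. Then this action satisfies the minimal condition on stabilizers: there is no infinite sequence (w_n) in V such that the pointwise stabilizers in GL(V) ⋉ V of {w_0, …, w_n} form a strictly decreasing sequence of subgroups. -/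
/-- The affine group of a vector space `V` (affine bijections `V ≃ᵃ[k] V`, i.e. `GL(V) ⋉ V`,
acting by `(g, v) • w = g w + v`) acts on `V` by evaluation. -/
instance affineGroupAction (k V : Type*) [Field k] [AddCommGroup V] [Module k V] :
    MulAction (V ≃ᵃ[k] V) V where
  smul := fun f w => f w
  one_smul := fun w => rfl
  mul_smul := fun f g w => rfl

/-!
An affine map fixing a set of points fixes their affine span. So if the pointwise stabilizer
of `{w 0, …, w n}` strictly shrinks when `w (n + 1)` is added, then `w (n + 1)` lies outside the
affine span of `w 0, …, w n`. The directions of these affine spans then form a strictly increasing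
chain of subspaces of `V`, which is impossible as `V` is finite-dimensional.
-/

theorem AffineMap.eq_self_of_mem_affineSpan {k V P : Type*} [Ring k] [AddCommGroup V]
    [Module k V] [AddTorsor V P] {s : Set P} {f : P →ᵃ[k] P} (hf : ∀ p ∈ s, f p = p)
    {p : P} (hp : p ∈ affineSpan k s) : f p = p :=
  AffineMap.eqOn_affineSpan (g := AffineMap.id k P) hf hp

section

variable {k V ι : Type*} [Field k] [AddCommGroup V] [Module k V]

theorem iInf_stabilizer_le_stabilizer_of_mem_affineSpan {t : Finset ι} {w : ι → V} {p : V}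
    (hp : p ∈ affineSpan k (w '' t)) :
    ⨅ j ∈ t, MulAction.stabilizer (V ≃ᵃ[k] V) (w j) ≤ MulAction.stabilizer (V ≃ᵃ[k] V) p := by
  intro f hf
  simp only [Subgroup.mem_iInf, MulAction.mem_stabilizer_iff] at hf
  rw [MulAction.mem_stabilizer_iff]
  refine AffineMap.eq_self_of_mem_affineSpan (f := f.toAffineMap) ?_ hp
  rintro - ⟨j, hj, rfl⟩
  exact hf j hj

theorem notMem_affineSpan_of_iInf_stabilizer_lt {w : ℕ → V} {n : ℕ}
    (hlt : ⨅ j ∈ Finset.range (n + 2), MulAction.stabilizer (V ≃ᵃ[k] V) (w j) <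
      ⨅ j ∈ Finset.range (n + 1), MulAction.stabilizer (V ≃ᵃ[k] V) (w j)) :
    w (n + 1) ∉ affineSpan k (w '' ↑(Finset.range (n + 1))) := by
  intro hmem
  rw [Finset.range_add_one (n := n + 1), Finset.iInf_insert] at hlt
  exact hlt.ne (inf_eq_right.mpr (iInf_stabilizer_le_stabilizer_of_mem_affineSpan hmem))

end

/-- For a finite-dimensional vector space `V` over a field `k`, the action of the affine
group `GL(V) ⋉ V` on `V` satisfies the minimal condition on stabilizers: there is no
sequence `(w n)` in `V` whose pointwise stabilizers of `{w 0, …, w n}` are strictly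
decreasing. -/
theorem affine_minCondStabilizers (k V : Type*) [Field k] [AddCommGroup V] [Module k V]
    [FiniteDimensional k V] :
    ¬ ∃ w : ℕ → V,
        StrictAnti (fun n : ℕ =>
          ⨅ j ∈ Finset.range (n + 1), MulAction.stabilizer (V ≃ᵃ[k] V) (w j)) := by
  rintro ⟨w, hw⟩
  set A : ℕ → AffineSubspace k V := fun n => affineSpan k (w '' ↑(Finset.range (n + 1)))
  have hA : StrictMono A := strictMono_nat_of_lt_succ fun n =>
    (affineSpan_mono k (Set.image_mono (by simp))).lt_of_not_ge fun hle =>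
      notMem_affineSpan_of_iInf_stabilizer_lt (hw n.lt_succ_self)
        (hle (subset_affineSpan k _ ⟨n + 1, by simp, rfl⟩))
  have hne : ∀ n, (A n : Set V).Nonempty := fun n =>
    ⟨w 0, subset_affineSpan k _ ⟨0, by simp, rfl⟩⟩
  exact not_strictMono_of_wellFoundedGT (fun n => (A n).direction)
    (strictMono_nat_of_lt_succ fun n =>
      AffineSubspace.direction_lt_of_nonempty (hA n.lt_succ_self) (hne n))
end

section
/- For α, β ∈ ℝ, if the 2-cocycles Ω_α and Ω_β on ℚ² (defined by Ω_α(v,w) = exp(2πiα·det(v,w))) are cohomologous, i.e., there exists φ : ℚ² → S¹ with Ω_β(v,w) = φ(v)φ(w)φ(v+w)⁻¹ Ω_α(v,w) for all v,w, then α = β. -/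
open Complex

/-- The 2-cocycle `Ω_α(v, w) = exp(2πiα·det(v, w))` on `ℚ²`, where
`det(v, w) = v₀w₁ − v₁w₀`. -/
noncomputable def OmegaAlpha (α : ℝ) (v w : Fin 2 → ℚ) : ℂ :=
  Complex.exp (2 * Real.pi * Complex.I * (α : ℂ) *
    ((v 0 * w 1 - v 1 * w 0 : ℚ) : ℂ))

/-!
The coboundary `φ v * φ w * (φ (v + w))⁻¹` is symmetric in `v, w`, so the ratio
`Ω(v, w) / Ω(w, v)` is a cohomology invariant. For `Ω_α` this ratio is
`exp(4πiα·det(v, w))`, so `Ω_α ~ Ω_β` forces `2(β − α)·det(v, w) ∈ ℤ` for all `v, w`.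
Since `det` takes every rational value, `2(β − α)` is a real number whose rational
multiples are all integers, hence zero.
-/

section Coboundary

variable {A M : Type*} [AddCommMagma A] [DivisionCommMonoid M]

def coboundary (φ : A → M) (v w : A) : M := φ v * φ w * (φ (v + w))⁻¹

lemma coboundary_comm (φ : A → M) (v w : A) : coboundary φ v w = coboundary φ w v := by
  rw [coboundary, coboundary, add_comm, mul_comm (φ v)]

lemma mul_swap_eq_of_eq_coboundary_mul {Ω Ω' : A → A → M} {φ : A → M}
    (h : ∀ v w, Ω' v w = coboundary φ v w * Ω v w) (v w : A) :
    Ω' v w * Ω w v = Ω' w v * Ω v w := by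
  rw [h, h, coboundary_comm φ w v]
  ac_rfl

end Coboundary

lemma exists_int_eq_of_exp_two_pi_I_mul_eq_one {x : ℝ} (h : exp (2 * Real.pi * I * x) = 1) :
    ∃ n : ℤ, x = n := by
  obtain ⟨n, hn⟩ := exp_eq_one_iff.mp h
  refine ⟨n, ?_⟩
  exact_mod_cast mul_left_cancel₀ two_pi_I_ne_zero (hn.trans (mul_comm (n : ℂ) _))

lemma eq_zero_of_forall_mul_rat_eq_int {t : ℝ} (h : ∀ q : ℚ, ∃ n : ℤ, t * q = n) : t = 0 := by
  obtain ⟨N, hN⟩ := exists_nat_gt |t|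
  have hN0 : (0 : ℝ) < N := (abs_nonneg t).trans_lt hN
  obtain ⟨n, hn⟩ := h (N : ℚ)⁻¹
  push_cast at hn
  have hn0 : n = 0 := by
    rw [← Int.abs_lt_one_iff, ← Int.cast_lt (R := ℝ), Int.cast_abs, ← hn, abs_mul,
      abs_inv, Nat.abs_cast, Int.cast_one, mul_inv_lt_iff₀ hN0, one_mul]
    exact hN
  rw [hn0, Int.cast_zero, mul_eq_zero] at hn
  exact hn.resolve_right (inv_ne_zero hN0.ne')

lemma omegaAlpha_ne_zero (α : ℝ) (v w : Fin 2 → ℚ) : OmegaAlpha α v w ≠ 0 :=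
  exp_ne_zero _

lemma exists_int_eq_of_omegaAlpha_mul_swap {α β : ℝ} {v w : Fin 2 → ℚ}
    (h : OmegaAlpha β v w * OmegaAlpha α w v = OmegaAlpha β w v * OmegaAlpha α v w) :
    ∃ n : ℤ, 2 * (β - α) * (v 0 * w 1 - v 1 * w 0 : ℚ) = n := by
  apply exists_int_eq_of_exp_two_pi_I_mul_eq_one
  have hquot : exp (2 * Real.pi * I * (2 * (β - α) * (v 0 * w 1 - v 1 * w 0 : ℚ) : ℝ)) =
      OmegaAlpha β v w * OmegaAlpha α w v / (OmegaAlpha β w v * OmegaAlpha α v w) := by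
    simp only [OmegaAlpha, ← Complex.exp_add, ← Complex.exp_sub]
    congr 1
    push_cast
    ring
  rw [hquot, h, div_self (mul_ne_zero (omegaAlpha_ne_zero β w v) (omegaAlpha_ne_zero α v w))]

theorem omegaAlpha_cohomologous_imp_eq_general (α β : ℝ) (φ : (Fin 2 → ℚ) → ℂ)
    (hcob : ∀ v w : Fin 2 → ℚ,
      OmegaAlpha β v w = φ v * φ w * (φ (v + w))⁻¹ * OmegaAlpha α v w) :
    α = β := by
  have hrat : ∀ q : ℚ, ∃ n : ℤ, 2 * (β - α) * q = n := fun q => by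
    obtain ⟨n, hn⟩ :=
      exists_int_eq_of_omegaAlpha_mul_swap (mul_swap_eq_of_eq_coboundary_mul hcob ![q, 0] ![0, 1])
    exact ⟨n, by simpa using hn⟩
  have hzero : 2 * (β - α) = 0 := eq_zero_of_forall_mul_rat_eq_int hrat
  linarith

/-- If the 2-cocycles `Ω_α` and `Ω_β` on `ℚ²` are cohomologous, then `α = β`. -/
theorem omegaAlpha_cohomologous_imp_eq (α β : ℝ) (φ : (Fin 2 → ℚ) → ℂ)
    (hmod : ∀ v, ‖φ v‖ = 1)
    (hcob : ∀ v w : Fin 2 → ℚ,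
      OmegaAlpha β v w = φ v * φ w * (φ (v + w))⁻¹ * OmegaAlpha α v w) :
    α = β :=
  omegaAlpha_cohomologous_imp_eq_general α β φ hcob
end

section
/- Let n ≥ 2 and let ω : ℚⁿ → S¹ be a group character (additive-to-multiplicative homomorphism) that is invariant under some finite-index subgroup Γ ≤ SL(n,ℤ), i.e., ω(g·x) = ω(x) for all g ∈ Γ and x ∈ ℚⁿ. Then ω is trivial: ω(x) = 1 for all x ∈ ℚⁿ. -/
/-!
A finite-index subgroup of `SL(n, ℤ)` contains a power `1 + m E_{ij}` (`m > 0`) of each elementary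
transvection. Invariance under it gives `ω (x + m xⱼ eᵢ) = ω x`, so `ω` kills `m xⱼ eᵢ` for every
`x`, that is every rational multiple of `eᵢ`. Since the `eᵢ` span `ℚⁿ`, `ω` is trivial.
-/

namespace Matrix

variable {ι R : Type*} [DecidableEq ι] [CommRing R]

lemma map_transvection {S : Type*} [CommRing S] (f : R →+* S) (i j : ι) (c : R) :
    (transvection i j c).map f = transvection i j (f c) := by
  simp [transvection, Matrix.map_add, map_single]

lemma transvection_mulVec [Fintype ι] (i j : ι) (c : R) (x : ι → R) :
    transvection i j c *ᵥ x = x + Pi.single i (c * x j) := by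
  rw [transvection, add_mulVec, one_mulVec, single_mulVec]
  rfl

namespace SpecialLinearGroup

variable [Fintype ι]

lemma transvection_nsmul {i j : ι} (hij : i ≠ j) (b : R) (m : ℕ) :
    transvection hij (m • b) = transvection hij b ^ m := by
  induction m with
  | zero => simp
  | succ m ih => rw [succ_nsmul, transvection_add, ih, pow_succ]

lemma exists_transvection_nsmul_mem (Γ : Subgroup (SpecialLinearGroup ι R)) [Γ.FiniteIndex]
    {i j : ι} (hij : i ≠ j) (b : R) : ∃ m : ℕ, 0 < m ∧ transvection hij (m • b) ∈ Γ := by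
  obtain ⟨m, hm, -, hmem⟩ :=
    Γ.exists_pow_mem_of_index_ne_zero Subgroup.FiniteIndex.index_ne_zero (transvection hij b)
  exact ⟨m, hm, transvection_nsmul hij b m ▸ hmem⟩

end SpecialLinearGroup

end Matrix

namespace AddChar

lemma map_eq_one_of_map_add_eq {A M : Type*} [AddGroup A] [Monoid M] (ψ : AddChar A M)
    {x v : A} (h : ψ (x + v) = ψ x) : ψ v = 1 := by
  calc ψ v = ψ (-x) * ψ (x + v) := by rw [← map_add_eq_mul, neg_add_cancel_left]
    _ = 1 := by rw [h, ← map_add_eq_mul, neg_add_cancel, map_zero_eq_one]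

lemma eq_zero_of_map_single_eq_one {ι A M : Type*} [Fintype ι] [DecidableEq ι] [AddCommMonoid A]
    [CommMonoid M] (ψ : AddChar (ι → A) M) (h : ∀ i a, ψ (Pi.single i a) = 1) : ψ = 0 := by
  apply toAddMonoidHomEquiv.injective
  rw [toAddMonoidHomEquiv_zero]
  exact AddMonoidHom.functions_ext _ _ _ fun i a ↦ by simp [h]

open Matrix in
lemma map_single_eq_one_of_forall_mulVec_eq {ι K M : Type*} [Fintype ι] [DecidableEq ι]
    [Field K] [CharZero K] [Monoid M] (Γ : Subgroup (SpecialLinearGroup ι ℤ)) [Γ.FiniteIndex]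
    (ψ : AddChar (ι → K) M)
    (hψ : ∀ g ∈ Γ, ∀ x, ψ ((g : Matrix ι ι ℤ).map (Int.cast : ℤ → K) *ᵥ x) = ψ x)
    {i j : ι} (hij : i ≠ j) (q : K) : ψ (Pi.single i q) = 1 := by
  obtain ⟨m, hm, hmem⟩ := SpecialLinearGroup.exists_transvection_nsmul_mem Γ hij (1 : ℤ)
  have hm₀ : (m : K) ≠ 0 := Nat.cast_ne_zero.2 hm.ne'
  refine ψ.map_eq_one_of_map_add_eq (x := Pi.single j (q / m)) ?_
  have : ψ ((transvection i j (m • 1 : ℤ)).map (Int.castRingHom K) *ᵥ Pi.single j (q / m)) =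
      ψ (Pi.single j (q / m)) := hψ _ hmem _
  rwa [map_transvection, transvection_mulVec, Pi.single_eq_same, nsmul_one, map_natCast,
    mul_div_cancel₀ _ hm₀] at this

end AddChar

/-- Let `n ≥ 2` and let `ω : ℚⁿ → S¹` be a character of the additive group `ℚⁿ` that is
invariant under a finite-index subgroup `Γ ≤ SL(n, ℤ)`. Then `ω` is trivial. -/
theorem invariant_character_trivial (n : ℕ) (hn : 2 ≤ n)
    (Γ : Subgroup (Matrix.SpecialLinearGroup (Fin n) ℤ)) (hΓ : Γ.FiniteIndex)
    (ω : (Fin n → ℚ) → ℂ)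
    (hmod : ∀ x : Fin n → ℚ, ‖ω x‖ = 1)
    (hhom : ∀ x y : Fin n → ℚ, ω (x + y) = ω x * ω y)
    (hinv : ∀ g ∈ Γ, ∀ x : Fin n → ℚ,
      ω ((((g : Matrix.SpecialLinearGroup (Fin n) ℤ) : Matrix (Fin n) (Fin n) ℤ).map
          (fun z : ℤ => (z : ℚ))).mulVec x) = ω x) :
    ∀ x : Fin n → ℚ, ω x = 1 := by
  have hω₀ : ω 0 = 1 := by
    have hne : ω 0 ≠ 0 := norm_ne_zero_iff.1 (by simp [hmod])
    exact (mul_eq_left₀ hne).1 (by rw [← hhom, add_zero])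
  let ψ : AddChar (Fin n → ℚ) ℂ := ⟨ω, hω₀, hhom⟩
  have : Nontrivial (Fin n) := Fin.nontrivial_iff_two_le.2 hn
  refine AddChar.eq_zero_iff.1 <| ψ.eq_zero_of_map_single_eq_one fun i q ↦ ?_
  obtain ⟨j, hji⟩ := exists_ne i
  exact ψ.map_single_eq_one_of_forall_mulVec_eq Γ hinv hji.symm q
end
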